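/- Positive definiteness of the deformed metric tensor: let α > 0 and β > 0 be real numbers, v a real number, p ≠ 0, and 2τ = pᵀ A p. Then the matrix G = (1/β) · h + (v/(αβ)) · p pᵀ is positive definite if and only if α + 2τv > 0. -/

import Mathlib

/-!
Write `c = pᵀ A p > 0` and scale `G` by `αβ`, giving `α A⁻¹ + v p pᵀ`. Testing this form on
`x = A p` gives `c (α + c v)`, so positivity forces `α + c v > 0`. Conversely, the Cauchy–Schwarz
inequality for the inner product `A⁻¹`, applied to `A p` and `x`, reads `(p ⬝ x)² ≤ c · xᵀ A⁻¹ x`;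
hence when `v < 0` the form is at least `(α + c v) · xᵀ A⁻¹ x`, and when `v ≥ 0` at least
`α · xᵀ A⁻¹ x`.
-/

open Matrix

variable {ι : Type*}

theorem Matrix.PosDef.isSymm {A : Matrix ι ι ℝ} (hA : A.PosDef) : A.IsSymm :=
  isHermitian_iff_isSymm.mp hA.isHermitian

variable [Fintype ι]

theorem dotProduct_mulVec_smul_add_smul_vecMulVec {R : Type*} [CommRing R]
    (M : Matrix ι ι R) (p x : ι → R) (a b : R) :
    x ⬝ᵥ (a • M + b • vecMulVec p p) *ᵥ x = a * (x ⬝ᵥ M *ᵥ x) + b * (p ⬝ᵥ x) ^ 2 := by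
  simp only [add_mulVec, smul_mulVec, vecMulVec_mulVec, dotProduct_add, dotProduct_smul,
    smul_eq_mul, op_smul_eq_smul, dotProduct_comm x p]
  ring

theorem Matrix.IsSymm.mulVec_dotProduct_inv_mulVec {R : Type*} [CommRing R] [DecidableEq ι]
    {A : Matrix ι ι R} (hA : A.IsSymm) (hdet : IsUnit A.det) (p x : ι → R) :
    (A *ᵥ p) ⬝ᵥ A⁻¹ *ᵥ x = p ⬝ᵥ x := by
  rw [dotProduct_mulVec, ← vecMul_transpose, hA.eq, vecMul_vecMul, mul_nonsing_inv _ hdet,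
    vecMul_one]

theorem Matrix.PosSemidef.dotProduct_mulVec_sq_le {M : Matrix ι ι ℝ} (hM : M.PosSemidef)
    (x y : ι → ℝ) : (x ⬝ᵥ M *ᵥ y) ^ 2 ≤ (x ⬝ᵥ M *ᵥ x) * (y ⬝ᵥ M *ᵥ y) := by
  let := M.toSeminormedAddCommGroup hM
  let := M.toInnerProductSpace hM
  have h := real_inner_mul_inner_self_le x y
  change (M *ᵥ y ⬝ᵥ star x) * (M *ᵥ y ⬝ᵥ star x) ≤ (M *ᵥ x ⬝ᵥ star x) * (M *ᵥ y ⬝ᵥ star y) at h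
  simpa only [star_trivial, dotProduct_comm _ x, dotProduct_comm _ y, sq] using h

namespace Matrix.PosDef

variable [DecidableEq ι] {A : Matrix ι ι ℝ}

theorem dotProduct_sq_le_mul_inv (hA : A.PosDef) (p x : ι → ℝ) :
    (p ⬝ᵥ x) ^ 2 ≤ (p ⬝ᵥ A *ᵥ p) * (x ⬝ᵥ A⁻¹ *ᵥ x) := by
  have hcross := hA.isSymm.mulVec_dotProduct_inv_mulVec hA.det_pos.ne'.isUnit p
  simpa only [hcross] using hA.inv.posSemidef.dotProduct_mulVec_sq_le (A *ᵥ p) x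

theorem smul_inv_add_smul_vecMulVec_iff (hA : A.PosDef) {p : ι → ℝ} (hp : p ≠ 0) {a : ℝ}
    (ha : 0 < a) (b : ℝ) :
    (a • A⁻¹ + b • vecMulVec p p).PosDef ↔ 0 < a + b * (p ⬝ᵥ A *ᵥ p) := by
  have hc : 0 < p ⬝ᵥ A *ᵥ p := by simpa only [star_trivial] using hA.dotProduct_mulVec_pos hp
  constructor
  · intro hG
    have hAp : A *ᵥ p ≠ 0 := fun h => by simp [h] at hc
    have hpos := hG.dotProduct_mulVec_pos hAp
    rw [star_trivial, dotProduct_mulVec_smul_add_smul_vecMulVec,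
      hA.isSymm.mulVec_dotProduct_inv_mulVec hA.det_pos.ne'.isUnit] at hpos
    nlinarith
  · intro h
    have hsymm : (a • A⁻¹ + b • vecMulVec p p).IsSymm :=
      (hA.inv.isSymm.smul a).add (IsSymm.smul (transpose_vecMulVec p p) b)
    refine .of_dotProduct_mulVec_pos (isHermitian_iff_isSymm.mpr hsymm) fun x hx => ?_
    have hq : 0 < x ⬝ᵥ A⁻¹ *ᵥ x := by
      simpa only [star_trivial] using hA.inv.dotProduct_mulVec_pos hx
    have hcs := hA.dotProduct_sq_le_mul_inv p x
    rw [star_trivial, dotProduct_mulVec_smul_add_smul_vecMulVec]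
    rcases le_or_gt 0 b with hb | hb
    · nlinarith [sq_nonneg (p ⬝ᵥ x)]
    · nlinarith [mul_le_mul_of_nonpos_left hcs hb.le]

end Matrix.PosDef

theorem deformed_metric_posDef_iff_general
    {n : ℕ} (A : Matrix (Fin n) (Fin n) ℝ) (hA : A.PosDef)
    (p : Fin n → ℝ) (hp : p ≠ 0) (α β v : ℝ) (hα : 0 < α) (hβ : 0 < β) :
    ((1 / β) • A⁻¹ + (v / (α * β)) • vecMulVec p p).PosDef ↔
      0 < α + (p ⬝ᵥ A.mulVec p) * v := by
  have hscale : 1 / β + v / (α * β) * (p ⬝ᵥ A *ᵥ p) = (α + (p ⬝ᵥ A *ᵥ p) * v) / (α * β) := by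
    field_simp
  rw [hA.smul_inv_add_smul_vecMulVec_iff hp (by positivity), hscale,
    div_pos_iff_of_pos_right (mul_pos hα hβ)]

/-- Positive definiteness of the deformed metric tensor: for `α, β > 0` and
`p ≠ 0`, the matrix `G = (1/β) h + (v/(αβ)) p pᵀ` is positive definite
if and only if `α + 2τ v > 0`, where `2τ = pᵀ A p` and `h = A⁻¹`. -/
theorem deformed_metric_posDef_iff
    {n : ℕ} (hn : 1 ≤ n) (A : Matrix (Fin n) (Fin n) ℝ) (hA : A.PosDef)
    (p : Fin n → ℝ) (hp : p ≠ 0) (α β v : ℝ) (hα : 0 < α) (hβ : 0 < β) :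
    ((1 / β) • A⁻¹ + (v / (α * β)) • vecMulVec p p).PosDef ↔
      0 < α + (p ⬝ᵥ A.mulVec p) * v :=
  deformed_metric_posDef_iff_general A hA p hp α β v hα hβ
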